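/- Let d ≥ 2 and let μ be any Borel probability measure on the unit sphere S^{d−1} ⊂ ℝ^d. Then ∫∫_{S^{d−1}×S^{d−1}} (⟨x, y⟩² − 1/(d+2))² dμ(x) dμ(y) ≥ 2(d+1)/(d(d+2)²). -/

import Mathlib

open RealInnerProductSpace MeasureTheory Finset

/-!
Choose `a` with `2a - d a² = 1/(d+2)` and let `A x = x xᵀ - a I`, viewed as a vector of
`ℝ^{d×d}`. For unit vectors `⟪A x, A y⟫ = ⟪x, y⟫² - 1/(d+2)`, so the kernel is `⟪Φ x, Φ y⟫`
with `Φ x = A x ⊗ A x`, and the energy is `‖∫ Φ dμ‖²`. Since `A x` is symmetric with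
`‖A x‖² = (d+1)/(d+2)`, its tensor square has the constant inner product `2(d+1)/(d+2)` with
`W = I + (swap)` (twice the projection onto symmetric matrices), and `‖W‖² = 2d(d+1)`.
Cauchy–Schwarz against `W` gives the bound.
-/

section FeatureMap

variable {X E : Type*} [MeasurableSpace X] [NormedAddCommGroup E] [InnerProductSpace ℝ E]
  [CompleteSpace E] {μ : Measure X} {Φ : X → E}

theorem integral_integral_inner_eq_norm_integral_sq (hΦ : Integrable Φ μ) :
    ∫ x, ∫ y, ⟪Φ x, Φ y⟫ ∂μ ∂μ = ‖∫ x, Φ x ∂μ‖ ^ 2 := by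
  simp_rw [integral_inner hΦ]
  rw [← real_inner_self_eq_norm_sq, ← integral_inner hΦ]
  exact integral_congr_ae (.of_forall fun x => real_inner_comm _ _)

theorem sq_div_norm_sq_le_norm_integral_sq [IsProbabilityMeasure μ] (hΦ : Integrable Φ μ)
    (w : E) {c : ℝ} (hw : ∀ x, ⟪w, Φ x⟫ = c) : c ^ 2 / ‖w‖ ^ 2 ≤ ‖∫ x, Φ x ∂μ‖ ^ 2 := by
  have hc : ⟪w, ∫ x, Φ x ∂μ⟫ = c := by simp [← integral_inner hΦ, hw]
  have cauchy_schwarz := abs_real_inner_le_norm w (∫ x, Φ x ∂μ)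
  rw [hc] at cauchy_schwarz
  refine div_le_of_le_mul₀ (by positivity) (by positivity) ?_
  rw [← mul_pow, ← sq_abs]
  exact pow_le_pow_left₀ (abs_nonneg c) (by linarith) 2

end FeatureMap

theorem exists_two_mul_sub_mul_sq_eq {n b : ℝ} (hn : 0 < n) (hb : n * b ≤ 1) :
    ∃ a : ℝ, 2 * a - n * a ^ 2 = b := by
  refine ⟨(1 - √(1 - n * b)) / n, ?_⟩
  have hs := Real.sq_sqrt (sub_nonneg.mpr hb)
  field_simp
  linear_combination (-1) * hs

namespace EuclideanSpace

variable {κ : Type*}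

noncomputable def tensorSq (v : EuclideanSpace ℝ κ) : EuclideanSpace ℝ (κ × κ) :=
  WithLp.toLp 2 fun q => v q.1 * v q.2

theorem continuous_tensorSq : Continuous (tensorSq : EuclideanSpace ℝ κ → _) :=
  (PiLp.continuous_toLp 2 _).comp <| continuous_pi fun q =>
    (EuclideanSpace.proj q.1).continuous.mul (EuclideanSpace.proj q.2).continuous

theorem real_inner_eq_sum [Fintype κ] (u v : EuclideanSpace ℝ κ) : ⟪u, v⟫ = ∑ k, u k * v k := by
  simp [PiLp.inner_apply, mul_comm]

theorem inner_tensorSq_tensorSq [Fintype κ] (u v : EuclideanSpace ℝ κ) :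
    ⟪tensorSq u, tensorSq v⟫ = ⟪u, v⟫ ^ 2 := by
  simp only [real_inner_eq_sum, tensorSq, Fintype.sum_prod_type, sq, Finset.sum_mul_sum]
  exact Finset.sum_congr rfl fun i _ => Finset.sum_congr rfl fun j _ => by ring

variable [DecidableEq κ]

noncomputable def graphIndicator (σ : κ → κ) : EuclideanSpace ℝ (κ × κ) :=
  WithLp.toLp 2 fun q => if q.1 = σ q.2 then 1 else 0

noncomputable def centeredOuter (a : ℝ) (x : EuclideanSpace ℝ κ) : EuclideanSpace ℝ (κ × κ) :=
  tensorSq x - a • graphIndicator id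

theorem centeredOuter_swap (a : ℝ) (x : EuclideanSpace ℝ κ) (p : κ × κ) :
    centeredOuter a x p.swap = centeredOuter a x p := by
  simp [centeredOuter, tensorSq, graphIndicator, mul_comm, eq_comm]

variable [Fintype κ]

theorem continuous_centeredOuter (a : ℝ) :
    Continuous (centeredOuter a : EuclideanSpace ℝ κ → _) :=
  continuous_tensorSq.sub continuous_const

theorem inner_graphIndicator_tensorSq (σ : κ → κ) (v : EuclideanSpace ℝ κ) :
    ⟪graphIndicator σ, tensorSq v⟫ = ∑ k, v (σ k) * v k := by
  simp only [real_inner_eq_sum, graphIndicator, tensorSq, Fintype.sum_prod_type]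
  rw [Finset.sum_comm]
  simp [ite_mul]

theorem inner_graphIndicator_graphIndicator (σ τ : κ → κ) :
    ⟪graphIndicator σ, graphIndicator τ⟫ = #{k | σ k = τ k} := by
  simp only [real_inner_eq_sum, graphIndicator, Fintype.sum_prod_type]
  rw [Finset.sum_comm, natCast_card_filter]
  simp [eq_comm]

theorem inner_graphIndicator_id_tensorSq (v : EuclideanSpace ℝ κ) :
    ⟪graphIndicator id, tensorSq v⟫ = ‖v‖ ^ 2 := by
  rw [inner_graphIndicator_tensorSq, ← real_inner_self_eq_norm_sq, real_inner_eq_sum]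
  rfl

theorem inner_centeredOuter (a : ℝ) (x y : EuclideanSpace ℝ κ) :
    ⟪centeredOuter a x, centeredOuter a y⟫
      = ⟪x, y⟫ ^ 2 - a * (‖x‖ ^ 2 + ‖y‖ ^ 2) + a ^ 2 * Fintype.card κ := by
  have h_card : ⟪graphIndicator (id : κ → κ), graphIndicator id⟫ = Fintype.card κ := by
    rw [inner_graphIndicator_graphIndicator]
    simp
  simp only [centeredOuter, inner_sub_left, inner_sub_right, real_inner_smul_left,
    real_inner_smul_right, inner_tensorSq_tensorSq, real_inner_comm (graphIndicator id),
    inner_graphIndicator_id_tensorSq, h_card]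
  ring

theorem inner_graphIndicator_add_swap_tensorSq (v : EuclideanSpace ℝ (κ × κ))
    (hv : ∀ p, v p.swap = v p) :
    ⟪graphIndicator id + graphIndicator Prod.swap, tensorSq v⟫ = 2 * ‖v‖ ^ 2 := by
  rw [inner_add_left, inner_graphIndicator_tensorSq, inner_graphIndicator_tensorSq,
    ← real_inner_self_eq_norm_sq, real_inner_eq_sum]
  simp only [id, hv]
  ring

theorem norm_graphIndicator_add_swap_sq :
    ‖graphIndicator id + graphIndicator (Prod.swap : κ × κ → κ × κ)‖ ^ 2
      = 2 * Fintype.card κ * (Fintype.card κ + 1) := by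
  have h_diag : #{p : κ × κ | id p = p.swap} = Fintype.card κ := by
    have : ({p : κ × κ | id p = p.swap} : Finset _) = (univ : Finset κ).diag := by
      ext p
      simp [Finset.mem_diag, Prod.ext_iff, eq_comm]
    rw [this, Finset.diag_card, card_univ]
  have h_all (σ : κ × κ → κ × κ) : ⟪graphIndicator σ, graphIndicator σ⟫ = Fintype.card κ ^ 2 := by
    rw [inner_graphIndicator_graphIndicator]
    simp [sq]
  rw [← real_inner_self_eq_norm_sq, inner_add_add_self, h_all, h_all,
    real_inner_comm (graphIndicator id), inner_graphIndicator_graphIndicator, h_diag]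
  ring

end EuclideanSpace

open EuclideanSpace

/-- For any Borel probability measure `μ` on the unit sphere `S^{d-1} ⊂ ℝ^d`, `d ≥ 2`,
the energy `∫∫ (⟪x, y⟫² - 1/(d+2))² dμ(x) dμ(y)` is at least `2(d+1)/(d(d+2)²)`. -/
theorem etf_energy_two (d : ℕ) (hd : 2 ≤ d)
    (μ : Measure (Metric.sphere (0 : EuclideanSpace ℝ (Fin d)) 1))
    [IsProbabilityMeasure μ] :
    2 * ((d : ℝ) + 1) / ((d : ℝ) * ((d : ℝ) + 2) ^ 2) ≤
      ∫ x, ∫ y,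
        (⟪(x : EuclideanSpace ℝ (Fin d)), (y : EuclideanSpace ℝ (Fin d))⟫ ^ 2
          - 1 / ((d : ℝ) + 2)) ^ 2 ∂μ ∂μ := by
  have hd_pos : (0 : ℝ) < d := by exact_mod_cast (by omega : 0 < d)
  obtain ⟨a, ha⟩ := exists_two_mul_sub_mul_sq_eq hd_pos (b := 1 / (d + 2)) (by
    rw [mul_one_div, div_le_one (by positivity)]
    linarith)
  let Φ (x : Metric.sphere (0 : EuclideanSpace ℝ (Fin d)) 1) :=
    tensorSq (centeredOuter a (x : EuclideanSpace ℝ (Fin d)))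
  have hΦ : Integrable Φ μ :=
    (continuous_tensorSq.comp ((continuous_centeredOuter a).comp continuous_subtype_val))
      |>.integrable_of_hasCompactSupport (.of_compactSpace _)
  have h_norm (x : Metric.sphere (0 : EuclideanSpace ℝ (Fin d)) 1) :
      ‖(x : EuclideanSpace ℝ (Fin d))‖ = 1 :=
    norm_eq_of_mem_sphere x
  have h_kernel (x y : Metric.sphere (0 : EuclideanSpace ℝ (Fin d)) 1) :
      ⟪Φ x, Φ y⟫ = (⟪(x : EuclideanSpace ℝ (Fin d)), y⟫ ^ 2 - 1 / ((d : ℝ) + 2)) ^ 2 := by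
    rw [inner_tensorSq_tensorSq, inner_centeredOuter, h_norm, h_norm, Fintype.card_fin, ← ha]
    ring
  have h_W (x : Metric.sphere (0 : EuclideanSpace ℝ (Fin d)) 1) :
      ⟪graphIndicator id + graphIndicator Prod.swap, Φ x⟫ = 2 * (1 - 1 / ((d : ℝ) + 2)) := by
    rw [inner_graphIndicator_add_swap_tensorSq _ (centeredOuter_swap a _),
      ← real_inner_self_eq_norm_sq, inner_centeredOuter, real_inner_self_eq_norm_sq, h_norm,
      Fintype.card_fin, ← ha]
    ring
  calc 2 * ((d : ℝ) + 1) / ((d : ℝ) * ((d : ℝ) + 2) ^ 2)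
      = (2 * (1 - 1 / ((d : ℝ) + 2))) ^ 2
          / ‖graphIndicator id + graphIndicator (Prod.swap : Fin d × Fin d → _)‖ ^ 2 := by
        rw [norm_graphIndicator_add_swap_sq, Fintype.card_fin]
        field_simp
        ring
    _ ≤ ‖∫ x, Φ x ∂μ‖ ^ 2 := sq_div_norm_sq_le_norm_integral_sq hΦ _ h_W
    _ = _ := by
        rw [← integral_integral_inner_eq_norm_integral_sq hΦ]
        simp_rw [h_kernel]
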